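/- For every n ≥ 1, the number of permutations p of length n such that s(p) avoids both 231 and 312 equals a_n, the number of 0-1-trees on n vertices; that is, |s^{-1}(Av_n(231,312))| = a_n. -/

import Mathlib

/-- The stack-sorting map `s`, implemented with a fuel parameter (the fuel
`l.length` always suffices, since the maximum of a nonempty list of naturals is
attained, so both recursive calls are on strictly shorter lists).
`s(ε) = ε` and `s(LmR) = s(L) s(R) m` where `m` is the maximum entry. -/
def stackSortAux : ℕ → List ℕ → List ℕ
  | 0, _ => []
  | _ + 1, [] => []
  | fuel + 1, a :: t =>
      let m := (a :: t).foldr max 0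
      stackSortAux fuel ((a :: t).takeWhile (fun x => x ≠ m)) ++
        stackSortAux fuel (((a :: t).dropWhile (fun x => x ≠ m)).tail) ++ [m]

/-- The stack-sorting map on finite sequences of (distinct) naturals. -/
def stackSort (l : List ℕ) : List ℕ := stackSortAux l.length l

/-- `l` is a permutation of `{1, 2, …, n}`, written in one-line notation. -/
def IsPermList (n : ℕ) (l : List ℕ) : Prop :=
  l.Perm ((List.range n).map (· + 1))

/-- The sequence `p` contains the pattern `q`: there is a strictly increasing choice
of positions of `p` on which the entries compare exactly as the entries of `q` do. -/
def ContainsPat (p q : List ℕ) : Prop :=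
  ∃ f : Fin q.length → Fin p.length, StrictMono f ∧
    ∀ i j : Fin q.length, q.get i < q.get j ↔ p.get (f i) < p.get (f j)

/-- The sequence `p` avoids the pattern `q`. -/
def AvoidsPat (p q : List ℕ) : Prop := ¬ ContainsPat p q

/-- A 0-1-tree: a plane binary tree (every non-leaf vertex has a left child, a
right child, or both) in which every vertex with two children carries a label
`0` or `1` (here, a `Bool`). -/
inductive ZOTree : Type
  | leaf : ZOTree
  | left (child : ZOTree) : ZOTree
  | right (child : ZOTree) : ZOTree
  | both (label : Bool) (lchild rchild : ZOTree) : ZOTree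

/-- The number of vertices of a 0-1-tree. -/
def ZOTree.size : ZOTree → ℕ
  | .leaf => 1
  | .left c => c.size + 1
  | .right c => c.size + 1
  | .both _ l r => l.size + r.size + 1

/-- `a n`: the number of 0-1-trees on `n` vertices (there are none on `0` vertices). -/
noncomputable def countZOTrees (n : ℕ) : ℕ :=
  Nat.card {t : ZOTree // t.size = n}

/-!
Write `p = L n R` with `n` the maximum, so that `s(p) = s(L) s(R) n`. A permutation avoids `231`
and `312` exactly when it is layered, i.e. never steps down by more than one. If `s(p)` is layered,
then `s(L)` ends with the maximum `c` of `L`, and `s(R)` has to walk down through every value below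
`c` that is missing from `L`. Hence `L` takes the values `1, …, i - 1, c` and `R` the others, where
either `c = i` or `i, …, c - 1` is the first layer of `s(R)`. Standardizing `L` and `R` gives two
smaller permutations of the same kind and, when both are nonempty, one binary choice; an empty `L`
or `R` corresponds to a vertex with a single child. This is the recursion of 0-1-trees, and
`ZOTree.toPerm` realizes it as a bijection.
-/

/-! ### The stack-sorting map -/

lemma le_foldr_max {l : List ℕ} {x : ℕ} (hx : x ∈ l) : x ≤ l.foldr max 0 := by
  induction l with
  | nil => cases hx
  | cons a t ih =>
    rcases List.mem_cons.1 hx with rfl | hx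
    · exact le_max_left _ _
    · exact (ih hx).trans (le_max_right _ _)

lemma foldr_max_le {l : List ℕ} {m : ℕ} (h : ∀ x ∈ l, x ≤ m) : l.foldr max 0 ≤ m := by
  induction l with
  | nil => exact Nat.zero_le m
  | cons a t ih => simp_all

lemma foldr_max_mem {l : List ℕ} (hl : l ≠ []) : l.foldr max 0 ∈ l := by
  induction l with
  | nil => exact absurd rfl hl
  | cons a t ih =>
    rcases eq_or_ne t [] with rfl | ht
    · simp
    · rcases max_choice a (t.foldr max 0) with h | h <;> simp [h, ih ht]

lemma exists_eq_append_max_cons {l : List ℕ} (hl : l ≠ []) :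
    ∃ L m R, l = L ++ m :: R ∧ (∀ x ∈ L, x < m) ∧ ∀ x ∈ R, x ≤ m := by
  obtain ⟨L, R, hmL, hl', -⟩ := List.exists_erase_eq (foldr_max_mem hl)
  refine ⟨L, _, R, hl', fun x hx => ?_, fun x hx => le_foldr_max ?_⟩
  · exact (le_foldr_max (by rw [hl']; simp [hx])).lt_of_ne (by rintro rfl; exact hmL hx)
  · rw [hl']; simp [hx]

lemma stackSortAux_append_cons {L R : List ℕ} {m : ℕ} (hL : ∀ x ∈ L, x < m)
    (hR : ∀ x ∈ R, x ≤ m) (f : ℕ) :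
    stackSortAux (f + 1) (L ++ m :: R) = stackSortAux f L ++ stackSortAux f R ++ [m] := by
  have hmax : (L ++ m :: R).foldr max 0 = m := by
    refine le_antisymm (foldr_max_le fun x hx => ?_) (le_foldr_max (by simp))
    rcases List.mem_append.1 hx with hx | hx
    · exact (hL x hx).le
    · rcases List.mem_cons.1 hx with rfl | hx
      exacts [le_rfl, hR x hx]
  have hne : ∀ x ∈ L, (decide (x ≠ m)) = true := fun x hx => by simpa using (hL x hx).ne
  obtain ⟨a, t, hat⟩ : ∃ a t, L ++ m :: R = a :: t := List.exists_cons_of_ne_nil (by simp)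
  rw [hat, stackSortAux]
  simp only [← hat, hmax, List.takeWhile_append_of_pos hne, List.dropWhile_append_of_pos hne]
  simp

theorem induction_on_append_max_cons {P : List ℕ → Prop} (nil : P [])
    (append_cons : ∀ L m R, (∀ x ∈ L, x < m) → (∀ x ∈ R, x ≤ m) → P L → P R →
      P (L ++ m :: R)) (l : List ℕ) : P l := by
  induction h : l.length using Nat.strong_induction_on generalizing l with
  | _ n ih =>
  rcases eq_or_ne l [] with rfl | hl
  · exact nil
  obtain ⟨L, m, R, rfl, hL, hR⟩ := exists_eq_append_max_cons hl
  simp only [List.length_append, List.length_cons] at h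
  exact append_cons L m R hL hR (ih _ (by omega) L rfl) (ih _ (by omega) R rfl)

@[simp] lemma stackSort_nil : stackSort [] = [] := rfl

lemma stackSortAux_eq_stackSort {l : List ℕ} {f : ℕ} (hf : l.length ≤ f) :
    stackSortAux f l = stackSort l := by
  induction l using induction_on_append_max_cons generalizing f with
  | nil => cases f <;> rfl
  | append_cons L m R hL hR ihL ihR =>
    simp only [List.length_append, List.length_cons] at hf
    obtain ⟨f, rfl⟩ : ∃ f', f = f' + 1 := ⟨f - 1, by omega⟩
    rw [stackSort, List.length_append, List.length_cons, ← add_assoc,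
      stackSortAux_append_cons hL hR, stackSortAux_append_cons hL hR,
      ihL (by omega), ihR (by omega), ihL (by omega), ihR (by omega)]

lemma stackSort_append_cons {L R : List ℕ} {m : ℕ} (hL : ∀ x ∈ L, x < m)
    (hR : ∀ x ∈ R, x ≤ m) : stackSort (L ++ m :: R) = stackSort L ++ stackSort R ++ [m] := by
  rw [stackSort, List.length_append, List.length_cons, ← add_assoc,
    stackSortAux_append_cons hL hR, stackSortAux_eq_stackSort (by omega),
    stackSortAux_eq_stackSort (by omega)]

lemma stackSort_perm (l : List ℕ) : (stackSort l).Perm l := by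
  induction l using induction_on_append_max_cons with
  | nil => rfl
  | append_cons L m R hL hR ihL ihR =>
    rw [stackSort_append_cons hL hR, List.append_assoc]
    exact ihL.append ((ihR.append_right [m]).trans (List.perm_append_singleton m R))

lemma stackSort_map {f : ℕ → ℕ} (hf : StrictMono f) (l : List ℕ) :
    stackSort (l.map f) = (stackSort l).map f := by
  induction l using induction_on_append_max_cons with
  | nil => rfl
  | append_cons L m R hL hR ihL ihR =>
    rw [List.map_append, List.map_cons, stackSort_append_cons, stackSort_append_cons hL hR, ihL,
      ihR]
    · simp
    · simpa using fun x hx => hf (hL x hx)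
    · simpa using fun x hx => hf.monotone (hR x hx)

lemma exists_stackSort_eq_append_max {l : List ℕ} (hl : l ≠ []) (hnd : l.Nodup) :
    ∃ u c, stackSort l = u ++ [c] ∧ ∀ x ∈ u, x < c := by
  obtain ⟨L, m, R, rfl, hL, hR⟩ := exists_eq_append_max_cons hl
  refine ⟨stackSort L ++ stackSort R, m, stackSort_append_cons hL hR, fun x hx => ?_⟩
  have hmLR : m ∉ L ++ R := (List.nodup_cons.1 (List.nodup_middle.1 hnd)).1
  rw [((stackSort_perm L).append (stackSort_perm R)).mem_iff, List.mem_append] at hx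
  rcases hx with hx | hx
  · exact hL x hx
  · exact (hR x hx).lt_of_ne fun h => hmLR (by simp [← h, hx])

/-! ### Permutations -/

lemma isPermList_iff {n : ℕ} {l : List ℕ} :
    IsPermList n l ↔ l.Nodup ∧ ∀ x, x ∈ l ↔ 1 ≤ x ∧ x ≤ n := by
  have hmem : ∀ x, x ∈ (List.range n).map (· + 1) ↔ 1 ≤ x ∧ x ≤ n := fun x => by
    simp only [List.mem_map, List.mem_range]
    exact ⟨by rintro ⟨y, hy, rfl⟩; omega, fun h => ⟨x - 1, by omega, by omega⟩⟩
  have hnd : ((List.range n).map (· + 1)).Nodup := List.nodup_range.map (add_left_injective 1)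
  refine ⟨fun h => ⟨h.nodup_iff.2 hnd, fun x => h.mem_iff.trans (hmem x)⟩, fun ⟨hl, h⟩ => ?_⟩
  exact (List.perm_ext_iff_of_nodup hl hnd).2 fun x => (h x).trans (hmem x).symm

lemma isPermList_stackSort {n : ℕ} {l : List ℕ} (h : IsPermList n l) :
    IsPermList n (stackSort l) :=
  (stackSort_perm l).trans h

namespace IsPermList

variable {n : ℕ} {l : List ℕ}

lemma nodup (h : IsPermList n l) : l.Nodup := (isPermList_iff.1 h).1

lemma mem_iff (h : IsPermList n l) {x : ℕ} : x ∈ l ↔ 1 ≤ x ∧ x ≤ n := (isPermList_iff.1 h).2 x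

lemma length_eq (h : IsPermList n l) : l.length = n := by simpa using List.Perm.length_eq h

lemma ne_nil (h : IsPermList n l) (hn : 1 ≤ n) : l ≠ [] := by
  rintro rfl
  have : 0 = n := h.length_eq
  omega

lemma mem_map_iff (h : IsPermList n l) {f : ℕ → ℕ} {x : ℕ} :
    x ∈ l.map f ↔ x ∈ f '' Set.Icc 1 n := by
  simp [h.mem_iff]

lemma exists_stackSort_eq_append (h : IsPermList n l) (hn : 1 ≤ n) :
    ∃ u, stackSort l = u ++ [n] ∧ ∀ x ∈ u, x < n := by
  obtain ⟨u, c, hlc, hu⟩ := exists_stackSort_eq_append_max (h.ne_nil hn) h.nodup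
  have hc : c ≤ n := ((isPermList_stackSort h).mem_iff.1 (by simp [hlc])).2
  have hnc : n ∈ u ++ [c] := hlc ▸ (isPermList_stackSort h).mem_iff.2 ⟨hn, le_rfl⟩
  obtain rfl : c = n := by
    rcases List.mem_append.1 hnc with hnu | hnc
    · exact absurd (hu n hnu) (by omega)
    · exact (List.mem_singleton.1 hnc).symm
  exact ⟨u, hlc, hu⟩

end IsPermList

lemma isPermList_append_cons_iff {n : ℕ} {L R : List ℕ} :
    IsPermList (n + 1) (L ++ (n + 1) :: R) ↔ IsPermList n (L ++ R) := by
  have hrange : ((List.range (n + 1)).map (· + 1)).Perm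
      ((n + 1) :: (List.range n).map (· + 1)) := by
    rw [List.range_succ, List.map_append]
    exact List.perm_append_singleton _ _
  unfold IsPermList
  exact ⟨fun h => (List.perm_cons _).1 (List.perm_middle.symm.trans (h.trans hrange)),
    fun h => (List.perm_middle.trans ((List.perm_cons _).2 h)).trans hrange.symm⟩

lemma exists_isPermList_map_eq {f : ℕ → ℕ} (hf : Function.Injective f) {k : ℕ} {l : List ℕ}
    (hl : l.Nodup) (hmem : ∀ x, x ∈ l ↔ x ∈ f '' Set.Icc 1 k) :
    ∃ l', IsPermList k l' ∧ l'.map f = l := by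
  have hmap : (l.map (Function.invFun f)).map f = l := by
    rw [List.map_map, List.map_congr_left fun x hx => ?_, List.map_id]
    obtain ⟨y, -, rfl⟩ := (hmem x).1 hx
    exact Function.invFun_eq ⟨y, rfl⟩
  refine ⟨_, isPermList_iff.2 ⟨List.Nodup.of_map f (by rwa [hmap]), fun y => ?_⟩, hmap⟩
  rw [← List.mem_map_of_injective hf, hmap, hmem, hf.mem_set_image, Set.mem_Icc]

/-! ### Layered sequences -/

/-- For a permutation, stepping down by at most one at a time is the same as being layered,
i.e. avoiding `231` and `312`. -/
def IsLayered (w : List ℕ) : Prop := w.IsChain (fun a b => a ≤ b + 1)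

namespace IsLayered

variable {w : List ℕ}

lemma mem_of_le_of_lt {c : ℕ} {v : List ℕ} (h : IsLayered (c :: v)) {b x : ℕ}
    (hb : b ∈ v) (hbx : b ≤ x) (hxc : x < c) : x ∈ v := by
  induction v generalizing c with
  | nil => cases hb
  | cons d v ih =>
    rw [IsLayered, List.isChain_cons_cons] at h
    rcases eq_or_ne x d with rfl | hxd
    · exact List.mem_cons_self
    · have hb : b ∈ v := (List.mem_cons.1 hb).resolve_left (by omega)
      exact List.mem_cons_of_mem _ (ih h.2 hb (by omega))

lemma head?_eq_sub_one {c y : ℕ} {v : List ℕ} (h : IsLayered (c :: v)) (hcv : c ∉ v)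
    (hy : y ∈ v) (hyc : y < c) : v.head? = some (c - 1) := by
  cases v with
  | nil => cases hy
  | cons d t =>
    rw [IsLayered, List.isChain_cons_cons] at h
    have hdc : d ≠ c := fun hdc => hcv (hdc ▸ List.mem_cons_self)
    have hcd : ¬ c < d := fun hcd => by
      have hyt : y ∈ t := (List.mem_cons.1 hy).resolve_left (by omega)
      exact hcv (List.mem_cons_of_mem _ (mem_of_le_of_lt h.2 hyt hyc.le hcd))
    simp only [List.head?_cons, Option.some.injEq]
    omega

lemma map {f : ℕ → ℕ} (h : IsLayered w)
    (hf : ∀ a ∈ w.dropLast, ∀ b ∈ w.tail, a ≤ b + 1 → f a ≤ f b + 1) :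
    IsLayered (w.map f) := by
  induction w with
  | nil => exact List.isChain_nil
  | cons a w ih =>
    rcases w with _ | ⟨b, w⟩
    · exact List.isChain_singleton _
    · rw [IsLayered, List.isChain_cons_cons] at h
      rw [List.map_cons, List.map_cons, IsLayered, List.isChain_cons_cons]
      refine ⟨hf a (by simp) b (by simp) h.1, ih h.2 fun x hx y hy => hf x ?_ y ?_⟩
      · rw [List.dropLast_cons_cons]; exact List.mem_cons_of_mem _ hx
      · exact List.mem_cons_of_mem _ hy

lemma of_map {f : ℕ → ℕ} (hf : StrictMono f) (h : IsLayered (w.map f)) : IsLayered w := by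
  rw [IsLayered, List.isChain_map] at h
  refine h.imp fun a b hab => ?_
  by_contra hlt
  have h₁ := hf (lt_add_one b)
  have h₂ := hf (by omega : b + 1 < a)
  omega

lemma append_singleton {x : ℕ} (h : IsLayered w) (hx : ∀ y ∈ w, y ≤ x + 1) :
    IsLayered (w ++ [x]) :=
  h.append (List.isChain_singleton x) fun y hy z hz => by
    simp only [List.head?_cons, Option.mem_def, Option.some.injEq] at hz
    exact hz ▸ hx y (List.mem_of_mem_getLast? hy)

end IsLayered

lemma isLayered_stackSort_append_cons_iff {n : ℕ} {L R : List ℕ} (hLR : ∀ x ∈ L ++ R, x ≤ n) :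
    IsLayered (stackSort (L ++ (n + 1) :: R)) ↔ IsLayered (stackSort L ++ stackSort R) := by
  have hmem : ∀ x ∈ stackSort L ++ stackSort R, x ≤ n := fun x hx =>
    hLR x (((stackSort_perm L).append (stackSort_perm R)).mem_iff.1 hx)
  rw [stackSort_append_cons (fun x hx => Nat.lt_succ_of_le (hLR x (List.mem_append_left _ hx)))
    (fun x hx => (hLR x (List.mem_append_right _ hx)).trans (Nat.le_succ n))]
  exact ⟨fun h => (List.isChain_append.1 h).1,
    fun h => h.append_singleton fun y hy => (hmem y hy).trans (by omega)⟩

/-- Since `v` cannot jump over a value on its way down from `c`, every entry of `u` is below every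
entry of `v`. So `u` holds `1, …, i - 1`, and `v` holds `i, …, c - 1` together with the values
above `c`; if `i < c`, then `v` starts with `c - 1`. -/
lemma IsLayered.exists_mem_iff_of_append_cons {u v : List ℕ} {c N : ℕ}
    (hperm : IsPermList N (u ++ c :: v)) (hlay : IsLayered (u ++ c :: v)) (hu : ∀ x ∈ u, x < c)
    (hv : v ≠ []) :
    ∃ i, 1 ≤ i ∧ i ≤ c ∧ (∀ x, x ∈ u ∨ x = c ↔ (1 ≤ x ∧ x < i) ∨ x = c) ∧
      (∀ x, x ∈ v ↔ (i ≤ x ∧ x < c) ∨ (c < x ∧ x ≤ N)) ∧ (i = c ∨ v.head? = some (c - 1)) := by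
  have hmem : ∀ x, x ∈ u ∨ x = c ∨ x ∈ v ↔ 1 ≤ x ∧ x ≤ N := fun x => by
    simpa using hperm.mem_iff (x := x)
  obtain ⟨-, hcv, huv⟩ := List.nodup_append.1 hperm.nodup
  replace hcv : c ∉ v := (List.nodup_cons.1 hcv).1
  replace huv : ∀ x ∈ u, x ∉ v := fun x hx hxv => huv x hx x (List.mem_cons_of_mem _ hxv) rfl
  have hcvl : IsLayered (c :: v) := List.IsChain.infix hlay (List.suffix_append u _).isInfix
  obtain ⟨y₀, hy₀, hmin⟩ := v.toFinset.exists_min_image id (by simpa using hv)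
  simp only [List.mem_toFinset, id] at hy₀ hmin
  have hy₀c : y₀ ≠ c := fun h => hcv (h ▸ hy₀)
  have hy₀N := (hmem y₀).1 (Or.inr (Or.inr hy₀))
  have hcN := (hmem c).1 (Or.inr (Or.inl rfl))
  have hu_lt : ∀ x ∈ u, x < y₀ := fun x hx => by
    by_contra! h
    exact huv x hx (hcvl.mem_of_le_of_lt hy₀ h (hu x hx))
  refine ⟨min c y₀, by omega, min_le_left _ _, fun x => ⟨?_, ?_⟩, fun x => ⟨fun hx => ?_, ?_⟩, ?_⟩
  · rintro (hx | rfl)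
    · exact Or.inl ⟨((hmem x).1 (Or.inl hx)).1, lt_min (hu x hx) (hu_lt x hx)⟩
    · exact Or.inr rfl
  · rintro (hx | rfl)
    · rcases (hmem x).2 ⟨hx.1, by omega⟩ with h | h | h
      exacts [Or.inl h, Or.inr h, absurd (hmin x h) (by omega)]
    · exact Or.inr rfl
  · have := hmin x hx
    have := (hmem x).1 (Or.inr (Or.inr hx))
    have : x ≠ c := fun h => hcv (h ▸ hx)
    omega
  · rintro (hx | hx)
    · exact hcvl.mem_of_le_of_lt hy₀ (by omega) hx.2
    · rcases (hmem x).2 ⟨by omega, hx.2⟩ with h | h | h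
      exacts [absurd (hu x h) (by omega), absurd h (by omega), h]
  · rcases lt_or_gt_of_ne hy₀c with hyc | hcy
    · exact Or.inr (hcvl.head?_eq_sub_one hcv hy₀ hyc)
    · exact Or.inl (min_eq_left hcy.le)

/-! ### Patterns -/

lemma List.Sublist.exists_eq_append_cons_of_triple {a b c : ℕ} {w : List ℕ}
    (h : [a, b, c].Sublist w) : ∃ u v, w = u ++ b :: v ∧ a ∈ u ∧ c ∈ v := by
  obtain ⟨r₁, r₂, rfl, ha, hbc⟩ := List.cons_sublist_iff.1 h
  obtain ⟨s₁, s₂, rfl, hb, hc⟩ := List.cons_sublist_iff.1 hbc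
  obtain ⟨t₁, t₂, rfl⟩ := List.append_of_mem hb
  exact ⟨r₁ ++ t₁, t₂ ++ s₂, by simp, by simp [ha], by simp [List.singleton_sublist.1 hc]⟩

lemma containsPat_triple_iff {w : List ℕ} {x y z : ℕ} :
    ContainsPat w [x, y, z] ↔ ∃ a b c, [a, b, c].Sublist w ∧
      ∀ i j : Fin 3, [x, y, z][i] < [x, y, z][j] ↔ [a, b, c][i] < [a, b, c][j] := by
  constructor
  · rintro ⟨f, hf, hcmp⟩
    refine ⟨w.get (f 0), w.get (f 1), w.get (f 2), ?_, fun i j => ?_⟩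
    · refine List.sublist_iff_exists_fin_orderEmbedding_get_eq.2
        ⟨OrderEmbedding.ofStrictMono f hf, fun i => ?_⟩
      fin_cases i <;> rfl
    · fin_cases i <;> fin_cases j <;> exact hcmp _ _
  · rintro ⟨a, b, c, hs, hcmp⟩
    obtain ⟨f, hf⟩ := List.sublist_iff_exists_fin_orderEmbedding_get_eq.1 hs
    refine ⟨f, f.strictMono, fun i j => ?_⟩
    rw [← hf i, ← hf j]
    exact hcmp i j

lemma containsPat_231_iff {w : List ℕ} :
    ContainsPat w [2, 3, 1] ↔ ∃ a b c, [a, b, c].Sublist w ∧ c < a ∧ a < b := by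
  simp only [containsPat_triple_iff, Fin.forall_fin_succ]
  refine exists₃_congr fun a b c => and_congr_right fun _ => ?_
  simp only [Fin.getElem_fin, Fin.val_zero, Fin.val_one, Fin.val_two, Fin.succ_zero_eq_one,
    Fin.succ_one_eq_two, List.getElem_cons_zero, List.getElem_cons_succ, IsEmpty.forall_iff,
    and_true]
  omega

lemma containsPat_312_iff {w : List ℕ} :
    ContainsPat w [3, 1, 2] ↔ ∃ a b c, [a, b, c].Sublist w ∧ b < c ∧ c < a := by
  simp only [containsPat_triple_iff, Fin.forall_fin_succ]
  refine exists₃_congr fun a b c => and_congr_right fun _ => ?_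
  simp only [Fin.getElem_fin, Fin.val_zero, Fin.val_one, Fin.val_two, Fin.succ_zero_eq_one,
    Fin.succ_one_eq_two, List.getElem_cons_zero, List.getElem_cons_succ, IsEmpty.forall_iff,
    and_true]
  omega

namespace IsLayered

variable {w : List ℕ}

lemma avoidsPat_231 (h : IsLayered w) (hw : w.Nodup) : AvoidsPat w [2, 3, 1] := by
  intro hcont
  obtain ⟨a, b, c, hs, hca, hab⟩ := containsPat_231_iff.1 hcont
  obtain ⟨u, v, rfl, ha, hc⟩ := hs.exists_eq_append_cons_of_triple
  have hbv : IsLayered (b :: v) := List.IsChain.infix h (List.suffix_append u _).isInfix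
  exact List.disjoint_of_nodup_append hw ha
    (List.mem_cons_of_mem _ (hbv.mem_of_le_of_lt hc hca.le hab))

lemma avoidsPat_312 (h : IsLayered w) (hw : w.Nodup) : AvoidsPat w [3, 1, 2] := by
  intro hcont
  obtain ⟨a, b, c, hs, hbc, hca⟩ := containsPat_312_iff.1 hcont
  obtain ⟨u, v, rfl, ha, hc⟩ := hs.exists_eq_append_cons_of_triple
  obtain ⟨u₁, u₂, rfl⟩ := List.append_of_mem ha
  have hab : IsLayered (a :: (u₂ ++ [b])) :=
    List.IsChain.infix h (by simpa using List.infix_append u₁ (a :: (u₂ ++ [b])) v)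
  have hcu : c ∈ u₂ := by
    simpa [hbc.ne'] using hab.mem_of_le_of_lt (by simp) hbc.le hca
  exact List.disjoint_of_nodup_append hw (by simp [hcu]) (List.mem_cons_of_mem _ hc)

end IsLayered

lemma containsPat_of_not_isLayered {n : ℕ} {w : List ℕ} (hw : IsPermList n w)
    (h : ¬ IsLayered w) : ContainsPat w [2, 3, 1] ∨ ContainsPat w [3, 1, 2] := by
  simp only [IsLayered, List.isChain_iff_forall_rel_of_append_cons_cons, not_forall,
    not_le] at h
  obtain ⟨a, b, l₁, l₂, rfl, hab⟩ := h
  have ha := hw.mem_iff.1 (by simp : a ∈ l₁ ++ a :: b :: l₂)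
  have hb₁ : b + 1 ∈ l₁ ++ a :: b :: l₂ := hw.mem_iff.2 ⟨by omega, by omega⟩
  simp only [List.mem_append, List.mem_cons] at hb₁
  rcases hb₁ with hb₁ | hb₁ | hb₁ | hb₁
  · exact Or.inl (containsPat_231_iff.2 ⟨b + 1, a, b,
      (List.singleton_sublist.2 hb₁).append (by simp), by omega, by omega⟩)
  · omega
  · omega
  · exact Or.inr (containsPat_312_iff.2 ⟨a, b, b + 1,
      List.sublist_append_of_sublist_right (by simpa using hb₁), by omega, by omega⟩)

theorem avoids_231_312_iff_isLayered {n : ℕ} {w : List ℕ} (hw : IsPermList n w) :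
    AvoidsPat w [2, 3, 1] ∧ AvoidsPat w [3, 1, 2] ↔ IsLayered w :=
  ⟨fun ⟨h₁, h₂⟩ => by_contra fun h => (containsPat_of_not_isLayered hw h).elim h₁ h₂,
    fun h => ⟨h.avoidsPat_231 hw.nodup, h.avoidsPat_312 hw.nodup⟩⟩

/-! ### Gluing two permutations at a new maximum -/

def raiseFrom (i m x : ℕ) : ℕ := if x < i then x else x + m

def shiftWithGap (i m x : ℕ) : ℕ := if x ≤ m then x + i - 1 else x + i

lemma raiseFrom_strictMono (i m : ℕ) : StrictMono (raiseFrom i m) := fun a b hab => by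
  unfold raiseFrom; split_ifs <;> omega

lemma shiftWithGap_strictMono {i : ℕ} (m : ℕ) (hi : 1 ≤ i) : StrictMono (shiftWithGap i m) :=
  fun a b hab => by unfold shiftWithGap; split_ifs <;> omega

lemma le_raiseFrom (i m x : ℕ) : x ≤ raiseFrom i m x := by
  unfold raiseFrom; split_ifs <;> omega

lemma shiftWithGap_le_add_one {i m a b : ℕ} (hab : a ≤ b + 1) (hbm : b ≠ m) :
    shiftWithGap i m a ≤ shiftWithGap i m b + 1 := by
  unfold shiftWithGap; split_ifs <;> omega

lemma raiseFrom_image_Icc {i : ℕ} (m : ℕ) (hi : 1 ≤ i) :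
    raiseFrom i m '' Set.Icc 1 i = Set.Ico 1 i ∪ {i + m} := by
  ext x
  simp only [Set.mem_image, Set.mem_Icc, Set.mem_union, Set.mem_Ico, Set.mem_singleton_iff]
  constructor
  · rintro ⟨y, hy, rfl⟩
    unfold raiseFrom; split_ifs <;> omega
  · rintro (hx | rfl)
    · exact ⟨x, by omega, if_pos hx.2⟩
    · exact ⟨i, by omega, by simp [raiseFrom]⟩

lemma shiftWithGap_image_Icc {i m j : ℕ} (hi : 1 ≤ i) (hm : m ≤ j) :
    shiftWithGap i m '' Set.Icc 1 j = Set.Ico i (i + m) ∪ Set.Ioc (i + m) (i + j) := by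
  ext x
  simp only [Set.mem_image, Set.mem_Icc, Set.mem_union, Set.mem_Ico, Set.mem_Ioc]
  constructor
  · rintro ⟨y, hy, rfl⟩
    unfold shiftWithGap; split_ifs <;> omega
  · rintro (hx | hx)
    · exact ⟨x + 1 - i, by omega, by unfold shiftWithGap; split_ifs <;> omega⟩
    · exact ⟨x - i, by omega, by unfold shiftWithGap; split_ifs <;> omega⟩

/-- `L` and `R` placed left and right of a new maximum, the left part relabelled onto
`1, …, i - 1, i + m` and the right part onto the remaining values, where `i = L.length`. -/
def glue (m : ℕ) (L R : List ℕ) : List ℕ :=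
  L.map (raiseFrom L.length m) ++ (L.length + R.length + 1) :: R.map (shiftWithGap L.length m)

section glue

variable {i j m : ℕ} {L R : List ℕ}

lemma isPermList_glue (hL : IsPermList i L) (hR : IsPermList j R) (hi : 1 ≤ i) (hm : m ≤ j) :
    IsPermList (i + j + 1) (glue m L R) := by
  rw [glue, hL.length_eq, hR.length_eq, isPermList_append_cons_iff, isPermList_iff,
    List.nodup_append]
  refine ⟨⟨hL.nodup.map (raiseFrom_strictMono i m).injective,
    hR.nodup.map (shiftWithGap_strictMono m hi).injective, fun a ha b hb => ?_⟩, fun x => ?_⟩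
  · rw [hL.mem_map_iff, raiseFrom_image_Icc m hi] at ha
    rw [hR.mem_map_iff, shiftWithGap_image_Icc hi hm] at hb
    simp only [Set.mem_union, Set.mem_Ico, Set.mem_Ioc, Set.mem_singleton_iff] at ha hb
    omega
  · rw [List.mem_append, hL.mem_map_iff, raiseFrom_image_Icc m hi, hR.mem_map_iff,
      shiftWithGap_image_Icc hi hm]
    simp only [Set.mem_union, Set.mem_Ico, Set.mem_Ioc, Set.mem_singleton_iff]
    omega

lemma stackSort_glue (hL : IsPermList i L) (hR : IsPermList j R) (hi : 1 ≤ i) (hm : m ≤ j) :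
    stackSort (glue m L R) = (stackSort L).map (raiseFrom i m) ++
      (stackSort R).map (shiftWithGap i m) ++ [i + j + 1] := by
  rw [glue, hL.length_eq, hR.length_eq, stackSort_append_cons,
    stackSort_map (raiseFrom_strictMono i m), stackSort_map (shiftWithGap_strictMono m hi)]
  · intro x hx
    rw [hL.mem_map_iff, raiseFrom_image_Icc m hi] at hx
    simp only [Set.mem_union, Set.mem_Ico, Set.mem_singleton_iff] at hx
    omega
  · intro x hx
    rw [hR.mem_map_iff, shiftWithGap_image_Icc hi hm] at hx
    simp only [Set.mem_union, Set.mem_Ico, Set.mem_Ioc] at hx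
    omega

lemma isLayered_stackSort_glue (hL : IsPermList i L) (hR : IsPermList j R) (hi : 1 ≤ i)
    (hj : 1 ≤ j) (hLl : IsLayered (stackSort L)) (hRl : IsLayered (stackSort R)) (hm : m = 0 ∨ (stackSort R).head? = some m) :
    IsLayered (stackSort (glue m L R)) := by
  have hsR := isPermList_stackSort hR
  obtain ⟨h, t, ht⟩ := List.exists_cons_of_ne_nil (hsR.ne_nil hj)
  rw [ht, List.head?_cons, Option.some.injEq] at hm
  have hh := hsR.mem_iff.1 (by simp [ht] : h ∈ stackSort R)
  have hmt : m ∉ t := by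
    rcases hm with rfl | rfl
    · exact fun hmt => by have := hsR.mem_iff.1 (show 0 ∈ stackSort R by simp [ht, hmt]); omega
    · exact (List.nodup_cons.1 (ht ▸ hsR.nodup)).1
  have hmj : m ≤ j := by omega
  obtain ⟨u, hu, hui⟩ := hL.exists_stackSort_eq_append hi
  have hA : IsLayered ((stackSort L).map (raiseFrom i m)) := hLl.map fun a ha b _ hab => by
    rw [hu, List.dropLast_concat] at ha
    rw [raiseFrom, if_pos (hui a ha)]
    exact hab.trans (Nat.succ_le_succ (le_raiseFrom i m b))
  have hB : IsLayered ((stackSort R).map (shiftWithGap i m)) := hRl.map fun a _ b hb hab =>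
    shiftWithGap_le_add_one hab fun hbm => hmt (by simpa [ht, hbm] using hb)
  have hperm := isPermList_stackSort (isPermList_glue hL hR hi hmj)
  rw [stackSort_glue hL hR hi hmj] at hperm ⊢
  refine IsLayered.append_singleton (hA.append hB fun x hx y hy => ?_) fun y hy =>
    (hperm.mem_iff.1 (List.mem_append_left _ hy)).2.trans (Nat.le_succ _)
  simp only [hu, ht, List.map_append, List.map_cons, List.map_nil, List.getLast?_concat,
    List.head?_cons, Option.mem_def, Option.some.injEq] at hx hy
  subst hx hy
  unfold raiseFrom shiftWithGap
  split_ifs <;> omega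

lemma map_raiseFrom_inj {i' m' : ℕ} {L' : List ℕ} (hL : IsPermList i L)
    (hL' : IsPermList i' L') (hi : 1 ≤ i) (h : L.map (raiseFrom i m) = L'.map (raiseFrom i' m')) :
    i = i' ∧ m = m' ∧ L = L' := by
  obtain rfl : i = i' := by simpa [hL.length_eq, hL'.length_eq] using congrArg List.length h
  have him : i + m ∈ L'.map (raiseFrom i m') := by
    rw [← h, hL.mem_map_iff, raiseFrom_image_Icc m hi]
    simp
  rw [hL'.mem_map_iff, raiseFrom_image_Icc m' hi] at him
  simp only [Set.mem_union, Set.mem_Ico, Set.mem_singleton_iff] at him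
  obtain rfl : m = m' := by omega
  exact ⟨rfl, rfl, List.map_injective_iff.2 (raiseFrom_strictMono i m).injective h⟩

end glue

lemma exists_glue_eq {k : ℕ} {L R : List ℕ} (hLR : IsPermList k (L ++ R))
    (hlay : IsLayered (stackSort L ++ stackSort R)) (hL : L ≠ []) (hR : R ≠ []) :
    ∃ i j m L' R', 1 ≤ i ∧ 1 ≤ j ∧ i + j = k ∧ IsPermList i L' ∧ IsPermList j R' ∧
      IsLayered (stackSort L') ∧ IsLayered (stackSort R') ∧
      (m = 0 ∨ (stackSort R').head? = some m) ∧ glue m L' R' = L ++ (k + 1) :: R := by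
  obtain ⟨hndL, hndR, -⟩ := List.nodup_append.1 hLR.nodup
  obtain ⟨u, c, hsL, hu⟩ := exists_stackSort_eq_append_max hL hndL
  have hsplit : stackSort L ++ stackSort R = u ++ c :: stackSort R := by simp [hsL]
  have hperm : IsPermList k (u ++ c :: stackSort R) :=
    hsplit ▸ ((stackSort_perm L).append (stackSort_perm R)).trans hLR
  have hlay' : IsLayered (u ++ c :: stackSort R) := hsplit ▸ hlay
  obtain ⟨i, hi, hic, hLmem, hRmem, hhead⟩ := hlay'.exists_mem_iff_of_append_cons hperm hu
    fun h => hR (h ▸ stackSort_perm R).nil_eq.symm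
  have hck : c ≤ k := (hperm.mem_iff.1 (by simp)).2
  obtain ⟨m, rfl⟩ : ∃ m, c = i + m := ⟨c - i, by omega⟩
  have hLimg : ∀ x, x ∈ L ↔ x ∈ raiseFrom i m '' Set.Icc 1 i := fun x => by
    rw [← (stackSort_perm L).mem_iff, hsL, List.mem_append, List.mem_singleton, hLmem,
      raiseFrom_image_Icc m hi]
    simp only [Set.mem_union, Set.mem_Ico, Set.mem_singleton_iff]
  have hRimg : ∀ x, x ∈ R ↔ x ∈ shiftWithGap i m '' Set.Icc 1 (k - i) := fun x => by
    rw [← (stackSort_perm R).mem_iff, hRmem, shiftWithGap_image_Icc hi (by omega)]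
    simp only [Set.mem_union, Set.mem_Ico, Set.mem_Ioc]
    omega
  obtain ⟨L', hL', rfl⟩ := exists_isPermList_map_eq (raiseFrom_strictMono i m).injective hndL hLimg
  obtain ⟨R', hR', rfl⟩ :=
    exists_isPermList_map_eq (shiftWithGap_strictMono m hi).injective hndR hRimg
  simp only [stackSort_map (raiseFrom_strictMono i m),
    stackSort_map (shiftWithGap_strictMono m hi)] at hlay hhead
  refine ⟨i, k - i, m, L', R', hi, ?_, by omega, hL', hR',
    IsLayered.of_map (raiseFrom_strictMono i m) (List.isChain_append.1 hlay).1,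
    IsLayered.of_map (shiftWithGap_strictMono m hi) (List.isChain_append.1 hlay).2.1, ?_, ?_⟩
  · have hR'ne : R' ≠ [] := by rintro rfl; exact hR rfl
    exact hR'.length_eq ▸ List.length_pos_of_ne_nil hR'ne
  · rcases hhead with hm | hhead
    · exact Or.inl (by omega)
    · cases hs : stackSort R' with
      | nil => simp [hs] at hhead
      | cons y t =>
        simp only [hs, List.map_cons, List.head?_cons, Option.some.injEq] at hhead ⊢
        unfold shiftWithGap at hhead
        split_ifs at hhead <;> omega
  · rw [glue, hL'.length_eq, hR'.length_eq, show i + (k - i) = k by omega]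

/-- When `s(R)` is layered it starts with its first layer `k, k - 1, …, 1`, so its head is the
size `k` of that layer. -/
def firstLayerSizeIf (b : Bool) (R : List ℕ) : ℕ := if b then (stackSort R).headI else 0

lemma firstLayerSizeIf_eq_zero_or {n : ℕ} {R : List ℕ} (hR : IsPermList n R) (hn : 1 ≤ n)
    (b : Bool) :
    firstLayerSizeIf b R = 0 ∨ (stackSort R).head? = some (firstLayerSizeIf b R) := by
  cases b
  · exact Or.inl rfl
  · obtain ⟨h, t, ht⟩ := List.exists_cons_of_ne_nil ((isPermList_stackSort hR).ne_nil hn)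
    simp [firstLayerSizeIf, ht]

lemma exists_firstLayerSizeIf_eq {R : List ℕ} {m : ℕ}
    (hm : m = 0 ∨ (stackSort R).head? = some m) : ∃ b, firstLayerSizeIf b R = m := by
  rcases hm with rfl | hm
  · exact ⟨false, rfl⟩
  · refine ⟨true, ?_⟩
    obtain ⟨t, ht⟩ := List.head?_eq_some_iff.1 hm
    simp [firstLayerSizeIf, ht]

lemma firstLayerSizeIf_left_injective {n : ℕ} {R : List ℕ} (hR : IsPermList n R) (hn : 1 ≤ n) :
    Function.Injective (firstLayerSizeIf · R) := by
  have hpos : (stackSort R).headI ≠ 0 := by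
    obtain ⟨h, t, ht⟩ := List.exists_cons_of_ne_nil ((isPermList_stackSort hR).ne_nil hn)
    have := (isPermList_stackSort hR).mem_iff.1 (by simp [ht] : h ∈ stackSort R)
    simp only [ht, List.headI_cons]
    omega
  intro b b' h
  cases b <;> cases b' <;> simp_all [firstLayerSizeIf]

/-! ### The bijection -/

namespace ZOTree

/-- The root carries the maximum; the label of a vertex with two children decides whether the
maximum of the left part is raised into the first layer of `s` of the right part. -/
def toPerm : ZOTree → List ℕ
  | leaf => [1]
  | left c => c.toPerm ++ [c.size + 1]
  | right c => (c.size + 1) :: c.toPerm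
  | both b l r => glue (firstLayerSizeIf b r.toPerm) l.toPerm r.toPerm

lemma one_le_size (t : ZOTree) : 1 ≤ t.size := by
  cases t <;> simp [size]

lemma isPermList_toPerm (t : ZOTree) : IsPermList t.size t.toPerm := by
  induction t with
  | leaf => exact List.Perm.refl _
  | left c ih => exact isPermList_append_cons_iff.2 (by rwa [List.append_nil])
  | right c ih => exact isPermList_append_cons_iff (L := []).2 ih
  | both b l r ihl ihr =>
    have hm := firstLayerSizeIf_eq_zero_or ihr r.one_le_size b
    refine isPermList_glue ihl ihr l.one_le_size ?_
    rcases hm with hm | hm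
    · omega
    · exact ((isPermList_stackSort ihr).mem_iff.1 (List.mem_of_mem_head? hm)).2

lemma length_toPerm (t : ZOTree) : t.toPerm.length = t.size := t.isPermList_toPerm.length_eq

lemma toPerm_ne_nil (t : ZOTree) : t.toPerm ≠ [] := t.isPermList_toPerm.ne_nil t.one_le_size

lemma isLayered_stackSort_toPerm (t : ZOTree) : IsLayered (stackSort t.toPerm) := by
  induction t with
  | leaf => exact List.isChain_singleton 1
  | left c ih =>
    refine (isLayered_stackSort_append_cons_iff fun x hx => ?_).2 (by simpa using ih)
    exact (c.isPermList_toPerm.mem_iff.1 (by simpa using hx)).2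
  | right c ih =>
    refine (isLayered_stackSort_append_cons_iff (L := []) fun x hx => ?_).2 (by simpa using ih)
    exact (c.isPermList_toPerm.mem_iff.1 (by simpa using hx)).2
  | both b l r ihl ihr =>
    exact isLayered_stackSort_glue l.isPermList_toPerm r.isPermList_toPerm l.one_le_size
      r.one_le_size ihl ihr (firstLayerSizeIf_eq_zero_or r.isPermList_toPerm r.one_le_size b)

def leftPart : ZOTree → List ℕ
  | leaf => []
  | left c => c.toPerm
  | right _ => []
  | both b l r => l.toPerm.map (raiseFrom l.size (firstLayerSizeIf b r.toPerm))

def rightPart : ZOTree → List ℕ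
  | leaf => []
  | left _ => []
  | right c => c.toPerm
  | both b l r => r.toPerm.map (shiftWithGap l.size (firstLayerSizeIf b r.toPerm))

lemma toPerm_eq_append_cons (t : ZOTree) : t.toPerm = t.leftPart ++ t.size :: t.rightPart := by
  cases t <;> simp [toPerm, leftPart, rightPart, glue, length_toPerm, size]

lemma parts_eq_of_toPerm_eq {t₁ t₂ : ZOTree} (h : t₁.toPerm = t₂.toPerm) :
    t₁.leftPart = t₂.leftPart ∧ t₁.rightPart = t₂.rightPart := by
  have hsize : t₁.size = t₂.size := by
    simpa [length_toPerm] using congrArg List.length h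
  have hnd := t₁.isPermList_toPerm.nodup
  rw [toPerm_eq_append_cons] at hnd
  have hnotMem := (List.nodup_cons.1 (List.nodup_middle.1 hnd)).1
  rw [toPerm_eq_append_cons, toPerm_eq_append_cons, hsize] at h
  obtain ⟨hl, -, hr⟩ := (List.append_cons_inj_of_notMem
    (fun h => hnotMem (by simp [hsize, h])) (fun h => hnotMem (by simp [hsize, h]))).1 h
  exact ⟨hl, hr⟩

lemma toPerm_injective : Function.Injective toPerm := by
  intro t₁ t₂ h
  induction t₁ generalizing t₂ with
  | leaf =>
    obtain ⟨hl, hr⟩ := parts_eq_of_toPerm_eq h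
    cases t₂ with
    | leaf => rfl
    | _ => simp_all [leftPart, rightPart, toPerm_ne_nil]
  | left c ih =>
    obtain ⟨hl, hr⟩ := parts_eq_of_toPerm_eq h
    cases t₂ with
    | left c' => exact congrArg left (ih hl)
    | _ => simp_all [leftPart, rightPart, toPerm_ne_nil]
  | right c ih =>
    obtain ⟨hl, hr⟩ := parts_eq_of_toPerm_eq h
    cases t₂ with
    | right c' => exact congrArg right (ih hr)
    | _ => simp_all [leftPart, rightPart, toPerm_ne_nil]
  | both b l r ihl ihr =>
    obtain ⟨hl, hr⟩ := parts_eq_of_toPerm_eq h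
    cases t₂ with
    | both b' l' r' =>
      obtain ⟨-, hm, hll⟩ := map_raiseFrom_inj l.isPermList_toPerm l'.isPermList_toPerm
        l.one_le_size hl
      obtain rfl := ihl hll
      rw [rightPart, rightPart, hm] at hr
      obtain rfl := ihr (List.map_injective_iff.2
        (shiftWithGap_strictMono _ l.one_le_size).injective hr)
      rw [firstLayerSizeIf_left_injective r.isPermList_toPerm r.one_le_size hm]
    | _ => simp_all [leftPart, rightPart, toPerm_ne_nil]

theorem exists_toPerm_eq {n : ℕ} {p : List ℕ} (hp : IsPermList n p) (hn : 1 ≤ n)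
    (hlay : IsLayered (stackSort p)) : ∃ t : ZOTree, t.toPerm = p := by
  induction n using Nat.strong_induction_on generalizing p with
  | _ n ih =>
  obtain ⟨k, rfl⟩ : ∃ k, n = k + 1 := ⟨n - 1, by omega⟩
  obtain ⟨L, R, rfl⟩ := List.append_of_mem (hp.mem_iff.2 ⟨hn, le_rfl⟩)
  have hLR := isPermList_append_cons_iff.1 hp
  rw [isLayered_stackSort_append_cons_iff fun x hx => (hLR.mem_iff.1 hx).2] at hlay
  rcases eq_or_ne R [] with rfl | hR
  · rw [List.append_nil] at hLR
    rcases Nat.eq_zero_or_pos k with rfl | hk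
    · obtain rfl : L = [] := List.eq_nil_of_length_eq_zero hLR.length_eq
      exact ⟨leaf, rfl⟩
    · obtain ⟨c, rfl⟩ := ih k (by omega) hLR hk (by simpa using hlay)
      exact ⟨left c, by rw [toPerm, ← c.length_toPerm, hLR.length_eq]⟩
  rcases eq_or_ne L [] with rfl | hL
  · rw [List.nil_append] at hLR
    rcases Nat.eq_zero_or_pos k with rfl | hk
    · exact absurd (List.eq_nil_of_length_eq_zero hLR.length_eq) hR
    · obtain ⟨c, rfl⟩ := ih k (by omega) hLR hk (by simpa using hlay)
      exact ⟨right c, by rw [toPerm, ← c.length_toPerm, hLR.length_eq, List.nil_append]⟩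
  obtain ⟨i, j, m, L', R', hi, hj, rfl, hL', hR', hlL, hlR, hm, hglue⟩ :=
    exists_glue_eq hLR hlay hL hR
  obtain ⟨tl, rfl⟩ := ih i (by omega) hL' hi hlL
  obtain ⟨tr, rfl⟩ := ih j (by omega) hR' hj hlR
  obtain ⟨b, rfl⟩ := exists_firstLayerSizeIf_eq hm
  exact ⟨both b tl tr, hglue⟩

noncomputable def toPermEquiv (n : ℕ) (hn : 1 ≤ n) :
    {t : ZOTree // t.size = n} ≃ {p : List ℕ // IsPermList n p ∧ IsLayered (stackSort p)} :=
  Equiv.ofBijective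
    (fun ⟨t, ht⟩ => ⟨t.toPerm, ht ▸ t.isPermList_toPerm, t.isLayered_stackSort_toPerm⟩)
    ⟨fun _ _ h => Subtype.ext (toPerm_injective (congrArg Subtype.val h)),
      fun ⟨_, hp, hlay⟩ =>
        let ⟨t, ht⟩ := exists_toPerm_eq hp hn hlay
        ⟨⟨t, by rw [← t.length_toPerm, ht, hp.length_eq]⟩, Subtype.ext ht⟩⟩

end ZOTree

/-- for every `n ≥ 1`, `|s⁻¹(Av_n(231, 312))| = a n`, the number of
0-1-trees on `n` vertices. -/
theorem preimage_av231_312_eq_zotree_count :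
    ∀ n : ℕ, 1 ≤ n →
      Nat.card {p : List ℕ // IsPermList n p ∧
          AvoidsPat (stackSort p) [2, 3, 1] ∧ AvoidsPat (stackSort p) [3, 1, 2]} =
        countZOTrees n := by
  intro n hn
  rw [countZOTrees, Nat.card_congr (ZOTree.toPermEquiv n hn)]
  exact Nat.card_congr (Equiv.subtypeEquivRight fun p => and_congr_right fun hp =>
    avoids_231_312_iff_isLayered (isPermList_stackSort hp))
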